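/- arXiv:2509.18927 — 2 statements merged into one kernel-verified Lean document; each statement's English description precedes it below -/
import Mathlib

section
/- Let u : [0,1] → ℝ be continuously differentiable with u > 0, and suppose u'(x) ≥ ε (x - d₁) u(x)^p for all x ∈ [d₁, d₂], where 0 ≤ d₁ < d₂ ≤ 1, ε > 0, p > 1. Then u(d₁) ≤ (2 / (ε (p-1) (d₂ - d₁)²))^{1/(p-1)}. -/
/-!
The substitution `w = u ^ (1 - p) / (p - 1)` linearises the differential inequality: it
turns `u' ≥ f u ^ p` into `w' ≤ -f`. Integrating `w' ≤ -ε (x - d₁)` over `[d₁, d₂]` and using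
`w(d₂) > 0` gives `u(d₁) ^ (1 - p) ≥ ε (p - 1) (d₂ - d₁)² / 2`, which is the bound after taking the
`(1 - p)`-th root.
-/

open Set

theorem hasDerivAt_rpow_one_sub_div {u : ℝ → ℝ} {u' x p : ℝ} (hu : HasDerivAt u u' x)
    (hpos : 0 < u x) (hp : p ≠ 1) :
    HasDerivAt (fun y => u y ^ (1 - p) / (p - 1)) (-(u' * u x ^ (-p))) x := by
  have hp' : p - 1 ≠ 0 := sub_ne_zero.mpr hp
  refine ((hu.rpow_const (p := 1 - p) (Or.inl hpos.ne')).div_const (p - 1)).congr_deriv ?_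
  rw [show 1 - p - 1 = -p by ring]
  field_simp
  ring

theorem sub_le_rpow_one_sub_sub_div_of_mul_rpow_le_deriv {u u' F f : ℝ → ℝ} {a b p : ℝ}
    (hab : a ≤ b) (hp : 1 < p)
    (hu : ∀ x ∈ Icc a b, HasDerivAt u (u' x) x) (hF : ∀ x ∈ Icc a b, HasDerivAt F (f x) x)
    (hpos : ∀ x ∈ Icc a b, 0 < u x) (hineq : ∀ x ∈ Icc a b, f x * u x ^ p ≤ u' x) :
    F b - F a ≤ (u a ^ (1 - p) - u b ^ (1 - p)) / (p - 1) := by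
  set G : ℝ → ℝ := fun x => u x ^ (1 - p) / (p - 1) + F x
  have hG : ∀ x ∈ Icc a b, HasDerivAt G (-(u' x * u x ^ (-p)) + f x) x := fun x hx =>
    (hasDerivAt_rpow_one_sub_div (hu x hx) (hpos x hx) hp.ne').add (hF x hx)
  have hG' : ∀ x ∈ Icc a b, -(u' x * u x ^ (-p)) + f x ≤ 0 := by
    intro x hx
    have hux := hpos x hx
    have hcancel : u x ^ p * u x ^ (-p) = 1 := by
      rw [← Real.rpow_add hux, add_neg_cancel, Real.rpow_zero]
    have := mul_le_mul_of_nonneg_right (hineq x hx) (Real.rpow_pos_of_pos hux (-p)).le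
    rw [mul_assoc, hcancel, mul_one] at this
    linarith
  have hanti : AntitoneOn G (Icc a b) := by
    refine antitoneOn_of_hasDerivWithinAt_nonpos (f' := fun x => -(u' x * u x ^ (-p)) + f x)
      (convex_Icc a b)
      (fun x hx => (hG x hx).continuousAt.continuousWithinAt) (fun x hx => ?_) (fun x hx => ?_)
    all_goals rw [interior_Icc] at hx
    · exact (hG x (Ioo_subset_Icc_self hx)).hasDerivWithinAt
    · exact hG' x (Ioo_subset_Icc_self hx)
  have := hanti (left_mem_Icc.mpr hab) (right_mem_Icc.mpr hab) hab
  simp only [G] at this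
  rw [sub_div]
  linarith

theorem le_one_div_rpow_of_le_rpow_one_sub {x c p : ℝ} (hx : 0 < x) (hc : 0 < c) (hp : 1 < p)
    (h : c ≤ x ^ (1 - p)) : x ≤ (1 / c) ^ (1 / (p - 1)) := by
  have hp' : 0 < p - 1 := sub_pos.mpr hp
  rw [one_div (p - 1), Real.le_rpow_inv_iff_of_pos hx.le (by positivity) hp',
    le_one_div (Real.rpow_pos_of_pos hx _) hc, one_div, ← Real.rpow_neg hx.le, neg_sub]
  exact h

theorem blowup_point_bound_general (u u' : ℝ → ℝ) (d₁ d₂ ε p : ℝ)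
    (hd₁ : 0 ≤ d₁) (hd : d₁ < d₂) (hd₂ : d₂ ≤ 1) (hε : 0 < ε) (hp : 1 < p)
    (hderiv : ∀ x ∈ Set.Icc (0 : ℝ) 1, HasDerivAt u (u' x) x)
    (hpos : ∀ x ∈ Set.Icc (0 : ℝ) 1, 0 < u x)
    (hineq : ∀ x ∈ Set.Icc d₁ d₂, ε * (x - d₁) * u x ^ p ≤ u' x) :
    u d₁ ≤ (2 / (ε * (p - 1) * (d₂ - d₁) ^ 2)) ^ (1 / (p - 1)) := by
  have hsub : Icc d₁ d₂ ⊆ Icc (0 : ℝ) 1 := Icc_subset_Icc hd₁ hd₂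
  have hF : ∀ x ∈ Icc d₁ d₂,
      HasDerivAt (fun y => ε / 2 * (y - d₁) ^ 2) (ε * (x - d₁)) x := fun x _ => by
    refine ((((hasDerivAt_id x).sub_const d₁).pow 2).const_mul (ε / 2)).congr_deriv ?_
    simp only [id, Nat.cast_ofNat]
    ring
  have hcompare := sub_le_rpow_one_sub_sub_div_of_mul_rpow_le_deriv hd.le hp
    (fun x hx => hderiv x (hsub hx)) hF (fun x hx => hpos x (hsub hx)) hineq
  have hd₂pos : 0 < u d₂ ^ (1 - p) :=
    Real.rpow_pos_of_pos (hpos d₂ (hsub (right_mem_Icc.mpr hd.le))) _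
  have hA : 0 < ε * (p - 1) * (d₂ - d₁) ^ 2 := by
    have := sub_pos.mpr hp
    have := sub_pos.mpr hd
    positivity
  have hkey : ε * (p - 1) * (d₂ - d₁) ^ 2 / 2 ≤ u d₁ ^ (1 - p) := by
    rw [le_div_iff₀ (sub_pos.mpr hp)] at hcompare
    nlinarith
  simpa only [one_div_div] using le_one_div_rpow_of_le_rpow_one_sub
    (hpos d₁ (hsub (left_mem_Icc.mpr hd.le))) (by positivity) hp hkey

/-- If `u` is positive and `C¹` on `[0,1]` with derivative `u'`, and
`u'(x) ≥ ε (x - d₁) u(x)^p` on `[d₁, d₂] ⊆ [0,1]` with `ε > 0`, `p > 1`, then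
`u(d₁) ≤ (2/(ε (p-1) (d₂-d₁)²))^{1/(p-1)}`. -/
theorem blowup_point_bound (u u' : ℝ → ℝ) (d₁ d₂ ε p : ℝ)
    (hd₁ : 0 ≤ d₁) (hd : d₁ < d₂) (hd₂ : d₂ ≤ 1) (hε : 0 < ε) (hp : 1 < p)
    (hderiv : ∀ x ∈ Set.Icc (0 : ℝ) 1, HasDerivAt u (u' x) x)
    (hcont : ContinuousOn u' (Set.Icc (0 : ℝ) 1))
    (hpos : ∀ x ∈ Set.Icc (0 : ℝ) 1, 0 < u x)
    (hineq : ∀ x ∈ Set.Icc d₁ d₂, ε * (x - d₁) * u x ^ p ≤ u' x) :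
    u d₁ ≤ (2 / (ε * (p - 1) * (d₂ - d₁) ^ 2)) ^ (1 / (p - 1)) :=
  blowup_point_bound_general u u' d₁ d₂ ε p hd₁ hd hd₂ hε hp hderiv hpos hineq
end

section
/- Let 0 < α < 1, let t₀ ∈ (0,T], and let w be C¹ on [0,T] with w(t) ≤ w(t₀) for all t ∈ [0, t₀]. Then (ᶜD_t^α w)(t₀) ≥ (w(t₀) − w(0)) t₀^{-α} / Γ(1-α) ≥ 0 when w(0) ≤ w(t₀). -/
open MeasureTheory Set Filter Topology

/-- The Caputo fractional derivative of order `α ∈ (0,1)` of a `C¹` function with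
derivative `w'`: `(ᶜD_t^α w)(t) = (1/Γ(1-α)) ∫₀^t (t-s)^{-α} w'(s) ds`. -/
noncomputable def caputoDeriv (α : ℝ) (w' : ℝ → ℝ) (t : ℝ) : ℝ :=
  (1 / Real.Gamma (1 - α)) * ∫ s in (0 : ℝ)..t, (t - s) ^ (-α) * w' s

/-- Extremum principle for the Caputo derivative: if `w` is `C¹` on `[0,T]` and
attains its maximum over `[0,t₀]` at `t₀ ∈ (0,T]` (in particular `w(0) ≤ w(t₀)`),
then `(ᶜD_t^α w)(t₀) ≥ (w(t₀) - w(0)) t₀^{-α} / Γ(1-α) ≥ 0`. -/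
theorem caputo_extremum_principle (α T t₀ : ℝ) (hα0 : 0 < α) (hα1 : α < 1)
    (ht₀ : 0 < t₀) (ht₀T : t₀ ≤ T) (w w' : ℝ → ℝ)
    (hderiv : ∀ s ∈ Set.Icc (0 : ℝ) T, HasDerivAt w (w' s) s)
    (hcont : ContinuousOn w' (Set.Icc (0 : ℝ) T))
    (hmax : ∀ t ∈ Set.Icc (0 : ℝ) t₀, w t ≤ w t₀) :
    (w t₀ - w 0) * t₀ ^ (-α) / Real.Gamma (1 - α) ≤ caputoDeriv α w' t₀ ∧
    0 ≤ (w t₀ - w 0) * t₀ ^ (-α) / Real.Gamma (1 - α) := by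
  have hΓ : 0 < Real.Gamma (1 - α) := Real.Gamma_pos_of_pos (by linarith)
  have hw0 : w 0 ≤ w t₀ := hmax 0 ⟨le_rfl, ht₀.le⟩
  have htα : (0:ℝ) < t₀ ^ (-α) := Real.rpow_pos_of_pos ht₀ _
  set C : ℝ := (w t₀ - w 0) * t₀ ^ (-α) with hCdef
  have hCnn : 0 ≤ C := mul_nonneg (by linarith) htα.le
  have hIccsub : Icc (0:ℝ) t₀ ⊆ Icc 0 T := Icc_subset_Icc le_rfl ht₀T
  have hcont' : ContinuousOn w' (Icc 0 t₀) := hcont.mono hIccsub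
  obtain ⟨M, hM⟩ := isCompact_Icc.exists_bound_of_continuousOn hcont'
  have hM0 : (0:ℝ) ≤ M := le_trans (norm_nonneg _) (hM 0 ⟨le_rfl, ht₀.le⟩)
  set f : ℝ → ℝ := fun s => (t₀ - s) ^ (-α) * w' s with hfdef
  -- integrability of `(t₀ - s)^(-α)` on `[0, t₀]`
  have hrpow_int : IntervalIntegrable (fun s => (t₀ - s) ^ (-α)) volume 0 t₀ := by
    have h := (intervalIntegral.intervalIntegrable_rpow' (a := 0) (b := t₀)
      (r := -α) (by linarith)).comp_sub_left t₀
    simpa using h.symm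
  -- integrability of `f` on `[0, t₀]`
  have hw'meas : AEStronglyMeasurable w' (volume.restrict (Set.uIoc (0:ℝ) t₀)) := by
    have : Set.uIoc (0:ℝ) t₀ = Ioc 0 t₀ := uIoc_of_le ht₀.le
    have h1 : AEStronglyMeasurable w' (volume.restrict (Icc 0 t₀)) :=
      hcont'.aestronglyMeasurable measurableSet_Icc
    rw [this]
    exact h1.mono_measure (Measure.restrict_mono Ioc_subset_Icc_self le_rfl)
  have hfint : IntervalIntegrable f volume 0 t₀ := by
    have hm1 : AEStronglyMeasurable (fun s : ℝ => (t₀ - s) ^ (-α))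
        (volume.restrict (Set.uIoc (0:ℝ) t₀)) := by
      rw [uIoc_of_le ht₀.le]
      exact hrpow_int.aestronglyMeasurable
    refine (hrpow_int.const_mul M).mono_fun' (hm1.mul hw'meas) ?_
    rw [uIoc_of_le ht₀.le]
    refine (ae_restrict_mem measurableSet_Ioc).mono fun s hs => ?_
    have hbase : (0:ℝ) ≤ t₀ - s := by linarith [hs.2]
    have hpos : (0:ℝ) ≤ (t₀ - s) ^ (-α) := Real.rpow_nonneg hbase _
    have hb := hM s ⟨hs.1.le, hs.2⟩
    simp only [norm_mul, Real.norm_eq_abs, hfdef]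
    rw [abs_of_nonneg hpos, mul_comm M]
    exact mul_le_mul_of_nonneg_left (by simpa using hb) hpos
  -- the primitive `I b = ∫₀^b f` is continuous on `[0, t₀]`
  have hIcont : ContinuousOn (fun b => ∫ s in (0:ℝ)..b, f s) (Icc 0 t₀) := by
    have := intervalIntegral.continuousOn_primitive_interval'
      (f := f) (μ := volume) (b₁ := 0) (b₂ := t₀) hfint
      (by rw [uIcc_of_le ht₀.le]; exact ⟨le_rfl, ht₀.le⟩)
    rwa [uIcc_of_le ht₀.le] at this
  -- integration by parts estimate for `b < t₀`
  have key : ∀ b ∈ Ico (0:ℝ) t₀,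
      C + (w b - w t₀) * (t₀ - b) ^ (-α) ≤ ∫ s in (0:ℝ)..b, f s := by
    intro b hb
    obtain ⟨hb0, hbt⟩ := hb
    set F : ℝ → ℝ := fun s => (w s - w t₀) * (t₀ - s) ^ (-α) with hFdef
    set G : ℝ → ℝ := fun s => (w t₀ - w s) * (t₀ - s) ^ (-α - 1) with hGdef
    have hF' : ∀ s ∈ Set.uIcc (0:ℝ) b, HasDerivAt F (f s - α * G s) s := by
      intro s hs
      rw [uIcc_of_le hb0] at hs
      have hst : s < t₀ := lt_of_le_of_lt hs.2 hbt
      have hbase : (0:ℝ) < t₀ - s := by linarith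
      have h1 : HasDerivAt (fun x : ℝ => (t₀ - x) ^ (-α))
          (α * (t₀ - s) ^ (-α - 1)) s := by
        have h2 : HasDerivAt (fun x : ℝ => t₀ - x) (-1) s := by
          simpa using (hasDerivAt_id s).const_sub t₀
        have h3 := (Real.hasDerivAt_rpow_const (x := t₀ - s) (p := -α)
          (Or.inl hbase.ne')).comp s h2
        exact h3.congr_deriv (by ring)
      have hws : HasDerivAt w (w' s) s := hderiv s ⟨hs.1, le_trans hst.le ht₀T⟩
      have h4 := ((hws.sub_const (w t₀)).mul h1)
      refine h4.congr_deriv ?_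
      simp only [hfdef, hGdef]
      ring
    have hcontb : ContinuousOn w' (Icc 0 b) :=
      hcont'.mono (Icc_subset_Icc le_rfl hbt.le)
    have hcontw : ContinuousOn w (Icc 0 b) := fun s hs =>
      ((hderiv s ⟨hs.1, le_trans (le_trans hs.2 hbt.le) ht₀T⟩).continuousAt).continuousWithinAt
    have hcontrpow : ∀ (p : ℝ), ContinuousOn (fun s : ℝ => (t₀ - s) ^ p) (Icc 0 b) := by
      intro p
      refine (continuousOn_const.sub continuousOn_id).rpow_const fun s hs => ?_
      left
      have : s < t₀ := lt_of_le_of_lt hs.2 hbt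
      intro h; simp only [Pi.sub_apply, id_eq] at h; rw [sub_eq_zero] at h; exact absurd h.symm this.ne
    have hfi : IntervalIntegrable f volume 0 b := by
      apply ContinuousOn.intervalIntegrable
      rw [uIcc_of_le hb0]
      exact (hcontrpow (-α)).mul hcontb
    have hGi : IntervalIntegrable G volume 0 b := by
      apply ContinuousOn.intervalIntegrable
      rw [uIcc_of_le hb0]
      exact (continuousOn_const.sub hcontw).mul (hcontrpow (-α - 1))
    have hibp : (∫ s in (0:ℝ)..b, (f s - α * G s)) = F b - F 0 :=
      intervalIntegral.integral_eq_sub_of_hasDerivAt hF' (hfi.sub (hGi.const_mul α))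
    have hsplit : (∫ s in (0:ℝ)..b, (f s - α * G s))
        = (∫ s in (0:ℝ)..b, f s) - α * ∫ s in (0:ℝ)..b, G s := by
      rw [intervalIntegral.integral_sub hfi (hGi.const_mul α),
        intervalIntegral.integral_const_mul]
    have hGnn : 0 ≤ ∫ s in (0:ℝ)..b, G s := by
      refine intervalIntegral.integral_nonneg hb0 fun s hs => ?_
      have h1 : w s ≤ w t₀ := hmax s ⟨hs.1, le_trans hs.2 hbt.le⟩
      have h2 : (0:ℝ) ≤ (t₀ - s) ^ (-α - 1) :=
        Real.rpow_nonneg (by linarith [hs.2, hbt] : (0:ℝ) ≤ t₀ - s) _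
      exact mul_nonneg (by linarith) h2
    have hF0 : F 0 = -C := by
      simp only [hFdef, hCdef, sub_zero]
      ring
    have : (∫ s in (0:ℝ)..b, f s) = F b + C + α * ∫ s in (0:ℝ)..b, G s := by
      rw [hsplit] at hibp
      rw [hF0] at hibp
      linarith
    rw [this]
    have : 0 ≤ α * ∫ s in (0:ℝ)..b, G s := mul_nonneg hα0.le hGnn
    simp only [hFdef]
    linarith
  -- the boundary error term tends to 0
  have herr : Tendsto (fun b => (w b - w t₀) * (t₀ - b) ^ (-α)) (𝓝[<] t₀) (𝓝 0) := by
    have hbound : ∀ b ∈ Ico (0:ℝ) t₀,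
        |(w b - w t₀) * (t₀ - b) ^ (-α)| ≤ M * (t₀ - b) ^ (1 - α) := by
      intro b hb
      have hbase : (0:ℝ) < t₀ - b := by linarith [hb.2]
      have hlip : ‖w t₀ - w b‖ ≤ M * ‖t₀ - b‖ := by
        refine (convex_Icc (0:ℝ) t₀).norm_image_sub_le_of_norm_hasDerivWithin_le
          (f' := w') (fun x hx => (hderiv x (hIccsub hx)).hasDerivWithinAt)
          (fun x hx => hM x hx) ⟨hb.1, hb.2.le⟩ ⟨ht₀.le, le_rfl⟩
      rw [Real.norm_eq_abs, Real.norm_eq_abs, abs_of_pos hbase] at hlip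
      rw [abs_mul, abs_of_nonneg (Real.rpow_nonneg hbase.le _)]
      have h1 : |w b - w t₀| ≤ M * (t₀ - b) := by rwa [abs_sub_comm]
      calc |w b - w t₀| * (t₀ - b) ^ (-α)
          ≤ (M * (t₀ - b)) * (t₀ - b) ^ (-α) :=
            mul_le_mul_of_nonneg_right h1 (Real.rpow_nonneg hbase.le _)
        _ = M * (t₀ - b) ^ (1 - α) := by
            rw [mul_assoc]
            congr 1
            nth_rewrite 1 [← Real.rpow_one (t₀ - b)]
            rw [← Real.rpow_add hbase]; congr 1
    have hten : Tendsto (fun b => M * (t₀ - b) ^ (1 - α)) (𝓝[<] t₀) (𝓝 0) := by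
      have h1 : Tendsto (fun b : ℝ => t₀ - b) (𝓝[<] t₀) (𝓝 0) := by
        have h0 : Tendsto (fun b : ℝ => t₀ - b) (𝓝 t₀) (𝓝 (t₀ - t₀)) :=
          tendsto_const_nhds.sub tendsto_id
        rw [sub_self] at h0
        exact h0.mono_left nhdsWithin_le_nhds
      have h2 : Tendsto (fun x : ℝ => x ^ (1 - α)) (𝓝 0) (𝓝 0) := by
        have := (Real.continuousAt_rpow_const 0 (1 - α) (Or.inr (by linarith : (0:ℝ) ≤ 1 - α))).tendsto
        simpa [Real.zero_rpow (by linarith : 1 - α ≠ 0)] using this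
      have := (h2.comp h1).const_mul M
      simpa using this
    rw [← nhdsWithin_Ico_eq_nhdsLT ht₀]
    refine squeeze_zero_norm' ?_ (hten.mono_left (nhdsWithin_mono _ Ico_subset_Iio_self))
    exact eventually_nhdsWithin_of_forall fun b hb => by
      simpa only [Real.norm_eq_abs] using hbound b hb
  -- pass to the limit
  have hkey2 : C ≤ ∫ s in (0:ℝ)..t₀, f s := by
    have hItend : Tendsto (fun b => ∫ s in (0:ℝ)..b, f s) (𝓝[<] t₀)
        (𝓝 (∫ s in (0:ℝ)..t₀, f s)) := by
      have h1 := (hIcont t₀ ⟨ht₀.le, le_rfl⟩).tendsto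
      rw [← nhdsWithin_Ico_eq_nhdsLT ht₀]
      exact h1.mono_left (nhdsWithin_mono _ Ico_subset_Icc_self)
    have hsub : Tendsto (fun b => (∫ s in (0:ℝ)..b, f s)
        - (w b - w t₀) * (t₀ - b) ^ (-α)) (𝓝[<] t₀)
        (𝓝 (∫ s in (0:ℝ)..t₀, f s)) := by
      have := hItend.sub herr
      simpa using this
    refine ge_of_tendsto hsub ?_
    rw [← nhdsWithin_Ico_eq_nhdsLT ht₀]
    exact eventually_nhdsWithin_of_forall fun b hb => by linarith [key b hb]
  constructor
  · rw [caputoDeriv, div_eq_mul_one_div, mul_comm C]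
    exact mul_le_mul_of_nonneg_left hkey2 (by positivity)
  · positivity
end
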